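/- Equality of the Potts and tricolor-edge partition functions: for a finite simple graph G, Σ_{σ : V → {1,…,q}} Π_{{i,j} ∈ E} e^{β(1{σ_i = σ_j} − 1)} Π_{i ∈ V} e^{h·1{σ_i = 1}} = Σ_{n consistent} (Π_{e ∈ E} e^{−β·1{n(e)=0}} (1 − e^{−β})^{1{n(e)=1} + 1{n(e)=2}}) · e^{h·S1(n)} (q − 1)^{C2(n)} (q − 1 + e^h)^{|V| − S1(n) − S2(n)}, where the right-hand sum is over all consistent edge tricolorings n : E → {0,1,2}. -/

import Mathlib

open Real
open scoped Classical

noncomputable section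

/-- Real-valued indicator of a proposition. -/
def ind (P : Prop) : ℝ := if P then 1 else 0

variable {V : Type*} [Fintype V] [DecidableEq V] (G : SimpleGraph V)

/-- Both endpoints of the edge `e` carry the spin `1` (encoded as `0 : Fin q`),
i.e. they are aligned with the external field. -/
def BothOne {q : ℕ} [NeZero q] (σ : V → Fin q) (e : Sym2 V) : Prop :=
  ∀ v ∈ e, σ v = 0

/-- Both endpoints of the edge `e` carry equal spins. -/
def Mono {q : ℕ} (σ : V → Fin q) (e : Sym2 V) : Prop :=
  ∀ v ∈ e, ∀ w ∈ e, σ v = σ w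

/-- Both endpoints of the edge `e` carry equal spins different from `1`
(encoded as `0 : Fin q`). -/
def MonoNotOne {q : ℕ} [NeZero q] (σ : V → Fin q) (e : Sym2 V) : Prop :=
  Mono σ e ∧ ∀ v ∈ e, σ v ≠ 0

/-- The colored Edwards–Sokal weight of a spin configuration `σ` together with an
edge tricoloring `n` of the graph `G`, at inverse temperature `β` and field `h`. -/
def omegaCES (q : ℕ) [NeZero q] (β h : ℝ) (σ : V → Fin q)
    (n : G.edgeFinset → Fin 3) : ℝ :=
  (∏ e : G.edgeFinset,
      (exp (-β) * ind (n e = 0)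
        + (1 - exp (-β)) * ind (n e = 1) * ind (BothOne σ (e : Sym2 V))
        + (1 - exp (-β)) * ind (n e = 2) * ind (MonoNotOne σ (e : Sym2 V)))) *
    ∏ v : V, exp (h * ind (σ v = 0))

/-- `S1 n` (resp. `S2 n`): the number of vertices incident to at least one edge of
color `1` (resp. color `2`). -/
def S (G : SimpleGraph V) (n : G.edgeFinset → Fin 3) (c : Fin 3) : ℕ :=
  (Finset.univ.filter fun v : V => ∃ e : G.edgeFinset, n e = c ∧ v ∈ (e : Sym2 V)).card

/-- The graph on `V` whose edges are the edges of `G` colored `2` by `n`. -/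
def colorTwoGraph (n : G.edgeFinset → Fin 3) : SimpleGraph V where
  Adj a b := ∃ e : G.edgeFinset, n e = 2 ∧ (e : Sym2 V) = s(a, b)
  symm := by
    constructor
    rintro a b ⟨e, h2, he⟩
    exact ⟨e, h2, by rw [he, Sym2.eq_swap]⟩
  loopless := by
    constructor
    rintro a ⟨e, h2, he⟩
    have hd : ¬(e : Sym2 V).IsDiag :=
      G.not_isDiag_of_mem_edgeSet (SimpleGraph.mem_edgeFinset.mp e.2)
    rw [he] at hd
    exact hd (Sym2.mk_isDiag_iff.mpr rfl)

/-- `C2 n`: the number of connected components of the graph whose edge set is the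
set of edges colored `2` and whose vertex set is the set of their endpoints
(i.e. the components of `colorTwoGraph G n` containing at least one edge). -/
def C2 (n : G.edgeFinset → Fin 3) : ℕ :=
  Nat.card {c : (colorTwoGraph G n).ConnectedComponent //
    ∃ a, (colorTwoGraph G n).connectedComponentMk a = c ∧
      ∃ b, (colorTwoGraph G n).Adj a b}

/-- The tricolor-edge-representation weight of an edge tricoloring `n`. -/
def terWeight (q : ℕ) (β h : ℝ) (n : G.edgeFinset → Fin 3) : ℝ :=
  (∏ e : G.edgeFinset,
      exp (-β) ^ (if n e = 0 then 1 else 0 : ℕ) *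
        (1 - exp (-β)) ^
          ((if n e = 1 then 1 else 0) + (if n e = 2 then 1 else 0) : ℕ)) *
    exp (h * S G n 1) * ((q : ℝ) - 1) ^ C2 G n *
      ((q : ℝ) - 1 + exp h) ^ (Fintype.card V - S G n 1 - S G n 2)

/-- An edge tricoloring is consistent if no vertex is incident to both a
color-1 edge and a color-2 edge. -/
def Consistent (n : G.edgeFinset → Fin 3) : Prop :=
  ∀ v : V, ¬((∃ e : G.edgeFinset, n e = 1 ∧ v ∈ (e : Sym2 V)) ∧
             (∃ e : G.edgeFinset, n e = 2 ∧ v ∈ (e : Sym2 V)))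

end

/-!
Expanding each Potts edge factor as
`e^{β(1{σ_i = σ_j} - 1)} = e^{-β} + (1 - e^{-β}) 1{σ_i = σ_j = 1} + (1 - e^{-β}) 1{σ_i = σ_j ≠ 1}`
writes the Potts weight of `σ` as the sum over tricolorings `n` of the colored Edwards–Sokal
weights `omegaCES`. For fixed `n`, these weights vanish unless `σ` is compatible with `n`:
spin `1` on the endpoints of color-1 edges, and a common spin `≠ 1` along each color-2 edge.
A compatible `σ` exists only for consistent `n`, and then compatible configurations correspond
bijectively to a choice of a spin `≠ 1` for each color-2 component together with an arbitrary
spin at each vertex touching neither color. Summing the field weights over this product yields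
`e^{h S1} (q - 1)^{C2} (q - 1 + e^h)^{|V| - S1 - S2}`.
-/

noncomputable section

open Finset

lemma prod_ind {ι : Type*} (s : Finset ι) (P : ι → Prop) :
    ∏ i ∈ s, ind (P i) = ind (∀ i ∈ s, P i) := by
  unfold ind; convert prod_boole

lemma sum_ind_mul {ι : Type*} [Fintype ι] (P : ι → Prop) (f : ι → ℝ) :
    ∑ i, ind (P i) * f i = ∑ i : {i // P i}, f i := by
  simp only [ind, ite_mul, one_mul, zero_mul]
  rw [← sum_filter]
  exact sum_subtype _ (by simp) f

variable {V : Type*}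

section EdgeExpansion

variable {q : ℕ} [NeZero q] {σ : V → Fin q} {e : Sym2 V}

lemma BothOne.mono (hb : BothOne σ e) : Mono σ e :=
  fun v hv w hw => (hb v hv).trans (hb w hw).symm

lemma BothOne.not_monoNotOne (hb : BothOne σ e) : ¬MonoNotOne σ e := by
  induction e using Sym2.ind with
  | _ a b => exact fun hm => hm.2 a (Sym2.mem_mk_left a b) (hb a (Sym2.mem_mk_left a b))

lemma Mono.monoNotOne_of_not_bothOne (hm : Mono σ e) (hb : ¬BothOne σ e) :
    MonoNotOne σ e :=
  ⟨hm, fun v hv h0 => hb fun w hw => (hm w hw v hv).trans h0⟩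

variable (σ e)

-- The factor of the edge `e` in `omegaCES`.
def cesEdgeFactor (β : ℝ) (c : Fin 3) : ℝ :=
  exp (-β) * ind (c = 0) + (1 - exp (-β)) * ind (c = 1) * ind (BothOne σ e)
    + (1 - exp (-β)) * ind (c = 2) * ind (MonoNotOne σ e)

lemma sum_cesEdgeFactor (β : ℝ) :
    ∑ c, cesEdgeFactor σ e β c = exp (β * (ind (Mono σ e) - 1)) := by
  by_cases hb : BothOne σ e
  · simp [cesEdgeFactor, ind, Fin.sum_univ_three, hb, hb.mono, hb.not_monoNotOne]
  by_cases hm : Mono σ e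
  · simp [cesEdgeFactor, ind, Fin.sum_univ_three, hb, hm, hm.monoNotOne_of_not_bothOne hb]
  · have hnm : ¬MonoNotOne σ e := fun h => hm h.1
    simp [cesEdgeFactor, ind, hb, hm, hnm]

def terEdgeWeight (β : ℝ) (c : Fin 3) : ℝ :=
  exp (-β) ^ (if c = 0 then 1 else 0 : ℕ) *
    (1 - exp (-β)) ^ ((if c = 1 then 1 else 0) + (if c = 2 then 1 else 0) : ℕ)

def FitsColor (c : Fin 3) : Prop :=
  (c = 1 → BothOne σ e) ∧ (c = 2 → MonoNotOne σ e)

lemma cesEdgeFactor_eq_terEdgeWeight_mul (β : ℝ) (c : Fin 3) :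
    cesEdgeFactor σ e β c = terEdgeWeight β c * ind (FitsColor σ e c) := by
  fin_cases c <;> simp [cesEdgeFactor, terEdgeWeight, FitsColor, ind]

end EdgeExpansion

variable [Fintype V]

def Compatible (G : SimpleGraph V) {q : ℕ} [NeZero q] (n : G.edgeFinset → Fin 3)
    (σ : V → Fin q) : Prop :=
  ∀ e : G.edgeFinset, FitsColor σ e (n e)

lemma omegaCES_eq [DecidableEq V] (G : SimpleGraph V) {q : ℕ} [NeZero q] (β h : ℝ)
    (σ : V → Fin q) (n : G.edgeFinset → Fin 3) :
    omegaCES G q β h σ n = (∏ e : G.edgeFinset, terEdgeWeight β (n e)) *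
      (ind (Compatible G n σ) * ∏ v, exp (h * ind (σ v = 0))) := by
  have hedges : ∏ e : G.edgeFinset, cesEdgeFactor σ e β (n e) =
      (∏ e : G.edgeFinset, terEdgeWeight β (n e)) * ind (Compatible G n σ) := by
    simp only [cesEdgeFactor_eq_terEdgeWeight_mul, prod_mul_distrib, prod_ind, mem_univ,
      true_implies, Compatible]
  rw [← mul_assoc, ← hedges]
  rfl

lemma sum_omegaCES_eq_potts [DecidableEq V] (G : SimpleGraph V) {q : ℕ} [NeZero q] (β h : ℝ)
    (σ : V → Fin q) :
    ∑ n : G.edgeFinset → Fin 3, omegaCES G q β h σ n =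
      (∏ e : G.edgeFinset, exp (β * (ind (Mono σ (e : Sym2 V)) - 1))) *
        ∏ v, exp (h * ind (σ v = 0)) := by
  simp only [← sum_cesEdgeFactor, Fintype.prod_sum, sum_mul]
  rfl

section Components

variable (G : SimpleGraph V)

abbrev IncidentColor (n : G.edgeFinset → Fin 3) (c : Fin 3) (v : V) : Prop :=
  ∃ e : G.edgeFinset, n e = c ∧ v ∈ (e : Sym2 V)

abbrev FreeVertex (n : G.edgeFinset → Fin 3) : Type _ :=
  {v : V // ¬IncidentColor G n 1 v ∧ ¬IncidentColor G n 2 v}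

abbrev ColorTwoComponent (n : G.edgeFinset → Fin 3) : Type _ :=
  {c : (colorTwoGraph G n).ConnectedComponent //
    ∃ a, (colorTwoGraph G n).connectedComponentMk a = c ∧ ∃ b, (colorTwoGraph G n).Adj a b}

variable {G} {n : G.edgeFinset → Fin 3}

lemma incidentColor_two_of_adj {a b : V} (hab : (colorTwoGraph G n).Adj a b) :
    IncidentColor G n 2 a := by
  obtain ⟨e, he, hab⟩ := hab
  exact ⟨e, he, by simp [hab]⟩

lemma colorTwoGraph_reachable_of_mem {e : G.edgeFinset} (he : n e = 2) {v w : V}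
    (hv : v ∈ (e : Sym2 V)) (hw : w ∈ (e : Sym2 V)) : (colorTwoGraph G n).Reachable v w := by
  rcases eq_or_ne v w with rfl | hvw
  · rfl
  · exact SimpleGraph.Adj.reachable ⟨e, he, (Sym2.mem_and_mem_iff hvw).1 ⟨hv, hw⟩⟩

def ColorTwoComponent.ofIncident {v : V} (hv : IncidentColor G n 2 v) :
    ColorTwoComponent G n :=
  ⟨(colorTwoGraph G n).connectedComponentMk v, v, rfl, by
    obtain ⟨e, he, hve⟩ := hv
    exact ⟨Sym2.Mem.other hve, e, he, (Sym2.other_spec hve).symm⟩⟩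

lemma Consistent.not_incidentColor_one (hn : Consistent G n) {v : V}
    (h2 : IncidentColor G n 2 v) : ¬IncidentColor G n 1 v :=
  fun h1 => hn v ⟨h1, h2⟩

variable {q : ℕ} [NeZero q] {σ : V → Fin q}

lemma Compatible.eq_zero (hσ : Compatible G n σ) {v : V} (hv : IncidentColor G n 1 v) :
    σ v = 0 := by
  obtain ⟨e, he, hve⟩ := hv
  exact (hσ e).1 he v hve

lemma Compatible.ne_zero (hσ : Compatible G n σ) {v : V} (hv : IncidentColor G n 2 v) :
    σ v ≠ 0 := by
  obtain ⟨e, he, hve⟩ := hv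
  exact ((hσ e).2 he).2 v hve

lemma Compatible.consistent (hσ : Compatible G n σ) : Consistent G n :=
  fun _ ⟨h1, h2⟩ => hσ.ne_zero h2 (hσ.eq_zero h1)

lemma Compatible.eq_of_adj (hσ : Compatible G n σ) {a b : V}
    (hab : (colorTwoGraph G n).Adj a b) : σ a = σ b := by
  obtain ⟨e, he, hab⟩ := hab
  exact ((hσ e).2 he).1 a (by simp [hab]) b (by simp [hab])

lemma Compatible.eq_of_walk (hσ : Compatible G n σ) {a b : V}
    (p : (colorTwoGraph G n).Walk a b) : σ a = σ b := by
  induction p with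
  | nil => rfl
  | cons hadj _ ih => exact (hσ.eq_of_adj hadj).trans ih

def Compatible.componentSpin (hσ : Compatible G n σ) (c : ColorTwoComponent G n) :
    {s : Fin q // s ≠ 0} :=
  ⟨c.1.lift σ fun _ _ p _ => hσ.eq_of_walk p, by
    obtain ⟨_, a, rfl, b, hab⟩ := c
    exact hσ.ne_zero (incidentColor_two_of_adj hab)⟩

variable (n) in
def assembleSpins (g : ColorTwoComponent G n → {s : Fin q // s ≠ 0})
    (f : FreeVertex G n → Fin q) (v : V) : Fin q :=
  if h1 : IncidentColor G n 1 v then 0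
  else if h2 : IncidentColor G n 2 v then g (.ofIncident h2)
  else f ⟨v, h1, h2⟩

lemma compatible_assembleSpins (hn : Consistent G n)
    (g : ColorTwoComponent G n → {s : Fin q // s ≠ 0}) (f : FreeVertex G n → Fin q) :
    Compatible G n (assembleSpins n g f) := by
  intro e
  refine ⟨fun he v hv => dif_pos ⟨e, he, hv⟩, fun he => ?_⟩
  have hval : ∀ v (h2 : IncidentColor G n 2 v), assembleSpins n g f v = g (.ofIncident h2) :=
    fun v h2 => by rw [assembleSpins, dif_neg (hn.not_incidentColor_one h2), dif_pos h2]
  refine ⟨fun v hv w hw => ?_, fun v hv => ?_⟩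
  · rw [hval v ⟨e, he, hv⟩, hval w ⟨e, he, hw⟩]
    congr 2
    exact Subtype.ext (SimpleGraph.ConnectedComponent.sound
      (colorTwoGraph_reachable_of_mem he hv hw))
  · rw [hval v ⟨e, he, hv⟩]
    exact (g _).2

variable (q) in
def compatibleEquiv (hn : Consistent G n) :
    {σ : V → Fin q // Compatible G n σ} ≃
      (ColorTwoComponent G n → {s : Fin q // s ≠ 0}) × (FreeVertex G n → Fin q) where
  toFun σ := (σ.2.componentSpin, fun v => σ.1 v)
  invFun p := ⟨assembleSpins n p.1 p.2, compatible_assembleSpins hn p.1 p.2⟩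
  left_inv σ := by
    refine Subtype.ext (funext fun v => ?_)
    simp only [assembleSpins]
    split_ifs with h1 h2
    · exact (σ.2.eq_zero h1).symm
    · rfl
    · rfl
  right_inv p := by
    refine Prod.ext (funext fun c => Subtype.ext ?_) (funext fun v => ?_)
    · obtain ⟨_, a, rfl, b, hab⟩ := c
      have h2 := incidentColor_two_of_adj hab
      show assembleSpins n p.1 p.2 a = _
      rw [assembleSpins, dif_neg (hn.not_incidentColor_one h2), dif_pos h2]
      rfl
    · exact (dif_neg v.2.1).trans (dif_neg v.2.2)

end Components

section Counting

variable [DecidableEq V] {G : SimpleGraph V} {n : G.edgeFinset → Fin 3} {q : ℕ} [NeZero q]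

lemma card_fin_ne_zero : Nat.card {s : Fin q // s ≠ 0} = q - 1 := by
  rw [Nat.card_eq_fintype_card, Fintype.card_subtype_compl, Fintype.card_subtype_eq,
    Fintype.card_fin]

lemma sum_exp_mul_ind_eq_zero (h : ℝ) :
    ∑ s : Fin q, exp (h * ind (s = 0)) = (q : ℝ) - 1 + exp h := by
  have hrest : ∀ s ∈ ({0}ᶜ : Finset (Fin q)), exp (h * ind (s = 0)) = 1 := fun s hs => by
    simp [ind, by simpa using hs]
  rw [Fintype.sum_eq_add_sum_compl 0, sum_congr rfl hrest, sum_const, card_compl,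
    card_singleton, Fintype.card_fin, nsmul_one, Nat.cast_pred (NeZero.pos q)]
  simp [ind, add_comm]

lemma S_eq_card_filter (c : Fin 3) : S G n c = #(univ.filter (IncidentColor G n c)) := rfl

lemma card_freeVertex (hn : Consistent G n) :
    Fintype.card (FreeVertex G n) = Fintype.card V - S G n 1 - S G n 2 := by
  have hdisj : Disjoint (univ.filter (IncidentColor G n 1)) (univ.filter (IncidentColor G n 2)) :=
    disjoint_filter.2 fun v _ h1 h2 => hn v ⟨h1, h2⟩
  have hfree : univ.filter (fun v => ¬IncidentColor G n 1 v ∧ ¬IncidentColor G n 2 v) =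
      (univ.filter (IncidentColor G n 1) ∪ univ.filter (IncidentColor G n 2))ᶜ := by
    ext v
    simp
  rw [Fintype.card_subtype, hfree, card_compl, card_union_of_disjoint hdisj, Nat.sub_sub,
    S_eq_card_filter, S_eq_card_filter]

lemma Compatible.prod_exp_mul_ind {σ : V → Fin q} (hσ : Compatible G n σ) (h : ℝ) :
    ∏ v, exp (h * ind (σ v = 0)) =
      exp h ^ S G n 1 * ∏ v : FreeVertex G n, exp (h * ind (σ v = 0)) := by
  have hvertex : ∀ v, exp (h * ind (σ v = 0)) =
      (if IncidentColor G n 1 v then exp h else 1) *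
        if ¬IncidentColor G n 1 v ∧ ¬IncidentColor G n 2 v then exp (h * ind (σ v = 0))
        else 1 := by
    intro v
    by_cases h1 : IncidentColor G n 1 v
    · simp [h1, hσ.eq_zero h1, ind]
    by_cases h2 : IncidentColor G n 2 v
    · simp [h1, h2, hσ.ne_zero h2, ind]
    · simp [h1, h2]
  rw [prod_congr rfl fun v _ => hvertex v, prod_mul_distrib, ← prod_filter, ← prod_filter,
    prod_const, ← S_eq_card_filter,
    prod_subtype _ fun _ => by rw [mem_filter, and_iff_right (mem_univ _)]]

lemma sum_ind_compatible_mul_prod_exp (hn : Consistent G n) (h : ℝ) :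
    ∑ σ : V → Fin q, ind (Compatible G n σ) * ∏ v, exp (h * ind (σ v = 0)) =
      exp (h * S G n 1) * ((q : ℝ) - 1) ^ C2 G n *
        ((q : ℝ) - 1 + exp h) ^ (Fintype.card V - S G n 1 - S G n 2) := by
  calc _ = ∑ σ : {σ : V → Fin q // Compatible G n σ},
          exp h ^ S G n 1 * ∏ v : FreeVertex G n, exp (h * ind (σ.1 v = 0)) := by
        rw [sum_ind_mul]
        exact sum_congr rfl fun σ _ => σ.2.prod_exp_mul_ind h
    _ = ∑ p : (ColorTwoComponent G n → {s : Fin q // s ≠ 0}) × (FreeVertex G n → Fin q),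
          exp h ^ S G n 1 * ∏ v, exp (h * ind (p.2 v = 0)) :=
        Fintype.sum_equiv (compatibleEquiv q hn) _ _ fun _ => rfl
    _ = exp h ^ S G n 1 * (Nat.card (ColorTwoComponent G n → {s : Fin q // s ≠ 0}) *
          ∏ _v : FreeVertex G n, ∑ s : Fin q, exp (h * ind (s = 0))) := by
        rw [Fintype.sum_prod_type_right, Fintype.prod_sum, mul_sum]
        simp only [sum_const, card_univ, ← Nat.card_eq_fintype_card, nsmul_eq_mul, mul_sum]
        exact sum_congr rfl fun _ _ => by ring
    _ = _ := by
        rw [Nat.card_fun, card_fin_ne_zero, ← C2, prod_const, card_univ, card_freeVertex hn,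
          sum_exp_mul_ind_eq_zero, Nat.cast_pow, Nat.cast_pred (NeZero.pos q), mul_comm h,
          exp_nat_mul]
        ring

end Counting

variable [DecidableEq V] (G : SimpleGraph V)

lemma sum_omegaCES_spins {q : ℕ} [NeZero q] (β h : ℝ) (n : G.edgeFinset → Fin 3) :
    ∑ σ : V → Fin q, omegaCES G q β h σ n =
      if Consistent G n then terWeight G q β h n else 0 := by
  simp only [omegaCES_eq, ← mul_sum]
  split_ifs with hn
  · rw [sum_ind_compatible_mul_prod_exp hn, terWeight]
    simp only [mul_assoc]
    rfl
  · have hσ : ∀ σ : V → Fin q, ¬Compatible G n σ := fun σ hσ => hn hσ.consistent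
    simp [ind, hσ]

theorem potts_partition_eq_ter_partition (q : ℕ) [NeZero q]
    (β h : ℝ) :
    ∑ σ : V → Fin q,
        (∏ e : G.edgeFinset, exp (β * (ind (Mono σ (e : Sym2 V)) - 1))) *
          ∏ v : V, exp (h * ind (σ v = 0)) =
      ∑ n ∈ Finset.univ.filter (fun n : G.edgeFinset → Fin 3 => Consistent G n),
        terWeight G q β h n := by
  simp only [← sum_omegaCES_eq_potts]
  rw [sum_comm, sum_filter]
  exact sum_congr rfl fun n _ => sum_omegaCES_spins G β h n

end
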